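/- If a multi inversion set K satisfies the planarity condition, then its transitive closure tc(K) also satisfies the planarity condition. -/

import Mathlib

/-- Planar rooted trees: leaves are unlabeled; internal nodes carry a natural
number label and an ordered list of children. -/
inductive STree : Type where
  | leaf : STree
  | node : ℕ → List STree → STree

namespace STree

mutual
  /-- `x` occurs as the label of an internal node of the tree. -/
  def mem (x : ℕ) : STree → Bool
    | .leaf => false
    | .node a cs => x == a || memL x cs
  def memL (x : ℕ) : List STree → Bool
    | [] => false
    | t :: ts => mem x t || memL x ts
end

mutual
  /-- The list of internal node labels, in preorder. -/
  def labels : STree → List ℕ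
    | .leaf => []
    | .node a cs => a :: labelsL cs
  def labelsL : List STree → List ℕ
    | [] => []
    | t :: ts => labels t ++ labelsL ts
end

mutual
  /-- Local well-formedness for the signature `s` : an internal node labeled `a`
  has `s a + 1` children, and all labels below it are smaller than `a`. -/
  def wf (s : ℕ → ℕ) : STree → Prop
    | .leaf => True
    | .node a cs => cs.length = s a + 1 ∧ (∀ b ∈ labelsL cs, b < a) ∧ wfL s cs
  def wfL (s : ℕ → ℕ) : List STree → Prop
    | [] => True
    | t :: ts => wf s t ∧ wfL s ts
end

/-- `T` is an `s`-decreasing tree: its internal nodes are labeled bijectively by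
`1, …, n`, node `i` has `s i + 1` ordered children, and all descendants of a node
have smaller labels. -/
def IsSDecreasingTree (n : ℕ) (s : ℕ → ℕ) (T : STree) : Prop :=
  wf s T ∧ (labels T).Perm (List.range' 1 n)

/-- Index of the first tree of the list containing the label `x`. -/
def idxOf (x : ℕ) : List STree → ℕ
  | [] => 0
  | t :: ts => if mem x t then 0 else idxOf x ts + 1

mutual
  /-- The cardinality `card_T(y,x)` of the pair `(y,x)` in the tree:
  `0` if `x` is (weakly) left of `y`, `i` if `x` lies in the `i`-th child
  subtree of `y`, and `s y` if `x` is right of `y`. -/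
  def card (s : ℕ → ℕ) (y x : ℕ) : STree → ℕ
    | .leaf => 0
    | .node a cs => if a = y then idxOf x cs else cardL s y x cs
  def cardL (s : ℕ → ℕ) (y x : ℕ) : List STree → ℕ
    | [] => 0
    | t :: ts =>
      if mem y t then
        (if mem x t then card s y x t else if memL x ts then s y else 0)
      else (if mem x t then 0 else cardL s y x ts)
end

/-- The tree-inversion multiset of `T`, as a multiplicity function on pairs
`(y,x)` with `1 ≤ x < y ≤ n`. -/
def treeInv (n : ℕ) (s : ℕ → ℕ) (T : STree) : ℕ → ℕ → ℕ := fun y x =>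
  if 1 ≤ x ∧ x < y ∧ y ≤ n then card s y x T else 0

/-- A multi inversion set on `1, …, n` bounded by the weak composition `s`. -/
def IsMultiInvSet (n : ℕ) (s : ℕ → ℕ) (I : ℕ → ℕ → ℕ) : Prop :=
  (∀ y x, I y x ≤ s y) ∧ ∀ y x, ¬(1 ≤ x ∧ x < y ∧ y ≤ n) → I y x = 0

/-- Transitivity: for `a < b < c`, `card(c,b) = i` implies `card(b,a) = 0` or
`card(c,a) ≥ i`. -/
def InvTransitive (I : ℕ → ℕ → ℕ) : Prop :=
  ∀ a b c : ℕ, a < b → b < c → I b a = 0 ∨ I c b ≤ I c a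

/-- Planarity: for `a < b < c`, `card(c,a) = i` implies `card(b,a) = s b` or
`card(c,b) ≥ i`. -/
def InvPlanar (s : ℕ → ℕ) (I : ℕ → ℕ → ℕ) : Prop :=
  ∀ a b c : ℕ, a < b → b < c → I b a = s b ∨ I c a ≤ I c b

/-- An `s`-tree-inversion set: a bounded multi inversion set that is transitive
and planar. -/
def IsTreeInvSet (n : ℕ) (s : ℕ → ℕ) (I : ℕ → ℕ → ℕ) : Prop :=
  IsMultiInvSet n s I ∧ InvTransitive I ∧ InvPlanar s I

/-- Inclusion of multi inversion sets: pointwise comparison of multiplicities. -/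
def invLE (I J : ℕ → ℕ → ℕ) : Prop := ∀ y x, I y x ≤ J y x

/-- The `s`-weak order: inclusion of tree-inversion multisets. -/
def sWeakLE (n : ℕ) (s : ℕ → ℕ) (T R : STree) : Prop :=
  invLE (treeInv n s T) (treeInv n s R)

/-- Union of multi inversion sets: pointwise maximum. -/
def invUnion (I J : ℕ → ℕ → ℕ) : ℕ → ℕ → ℕ := fun y x => max (I y x) (J y x)

/-- Transitive closure: `tc I (c,a)` is the maximal value of `I (b₁, b₂)` over
all transitivity paths `c = b₁ > b₂ > … > b_k = a` (consecutive entries have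
positive multiplicity). -/
noncomputable def tc (I : ℕ → ℕ → ℕ) : ℕ → ℕ → ℕ := fun c a =>
  sSup {v | ∃ (b : ℕ) (l : List ℕ),
    List.Chain (fun u w => w < u ∧ 0 < I u w) c (b :: l) ∧
    (b :: l).getLast (List.cons_ne_nil b l) = a ∧ v = I c b}

/-- Adding the inversion `(c,a)`: increase its multiplicity by one. -/
def addInv (I : ℕ → ℕ → ℕ) (c a : ℕ) : ℕ → ℕ → ℕ := fun y x =>
  if y = c ∧ x = a then I y x + 1 else I y x

mutual
  /-- `a` is a (proper) descendant of the node labeled `c`. -/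
  def descIn (c a : ℕ) : STree → Bool
    | .leaf => false
    | .node b cs => (b == c && memL a cs) || descInL c a cs
  def descInL (c a : ℕ) : List STree → Bool
    | [] => false
    | t :: ts => descIn c a t || descInL c a ts
end

mutual
  /-- `a` belongs to the rightmost child subtree of the node labeled `c`. -/
  def inRight (c a : ℕ) : STree → Bool
    | .leaf => false
    | .node b cs =>
      (b == c && (match cs.getLast? with
        | some t => mem a t
        | none => false)) || inRightL c a cs
  def inRightL (c a : ℕ) : List STree → Bool
    | [] => false
    | t :: ts => inRight c a t || inRightL c a ts
end

mutual
  /-- `a` belongs to the leftmost child subtree of the node labeled `c`. -/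
  def inLeft (c a : ℕ) : STree → Bool
    | .leaf => false
    | .node b cs =>
      (b == c && (match cs.head? with
        | some t => mem a t
        | none => false)) || inLeftL c a cs
  def inLeftL (c a : ℕ) : List STree → Bool
    | [] => false
    | t :: ts => inLeft c a t || inLeftL c a ts
end

mutual
  /-- The rightmost child subtree of the node labeled `a` is empty (a leaf). -/
  def rightEmpty (a : ℕ) : STree → Bool
    | .leaf => false
    | .node b cs =>
      (b == a && (match cs.getLast? with
        | some .leaf => true
        | _ => false)) || rightEmptyL a cs
  def rightEmptyL (a : ℕ) : List STree → Bool
    | [] => false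
    | t :: ts => rightEmpty a t || rightEmptyL a ts
end

/-- `(a,c)` is a tree-ascent of `T`: `a` is a descendant of `c`, not in the
rightmost subtree of `c`; `a` lies in the rightmost subtree of any `b` with
`a < b < c` having `a` as a descendant; and if `s a > 0` the rightmost
(strict right) subtree of `a` is empty. -/
def IsTreeAscent (s : ℕ → ℕ) (T : STree) (a c : ℕ) : Prop :=
  a < c ∧ descIn c a T = true ∧ inRight c a T = false ∧
  (∀ b : ℕ, a < b → b < c → descIn b a T = true → inRight b a T = true) ∧
  (0 < s a → rightEmpty a T = true)

/-- `a` is the root label of the tree. -/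
def hasRoot (a : ℕ) : STree → Bool
  | .leaf => false
  | .node b _ => a == b

mutual
  /-- `a` is a direct child of the node `c`, but not its rightmost child. -/
  def nonRightChild (c a : ℕ) : STree → Bool
    | .leaf => false
    | .node b cs => (b == c && cs.dropLast.any (hasRoot a)) || nonRightChildL c a cs
  def nonRightChildL (c a : ℕ) : List STree → Bool
    | [] => false
    | t :: ts => nonRightChild c a t || nonRightChildL c a ts
end

/-- `(a,c)` is a Tamari-ascent of `T`: `a` is a non-right child of `c`. -/
def IsTamariAscent (T : STree) (a c : ℕ) : Prop :=
  a < c ∧ nonRightChild c a T = true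

mutual
  /-- Horizontal mirror image of a tree: the order of children is reversed at
  every internal node. -/
  def mirror : STree → STree
    | .leaf => .leaf
    | .node a cs => .node a (mirrorL cs)
  def mirrorL : List STree → List STree
    | [] => []
    | t :: ts => mirrorL ts ++ [mirror t]
end

/-- `T` is an `s`-Tamari tree: `card(c,a) ≤ card(c,b)` for all `a < b < c`. -/
def TamariProp (n : ℕ) (s : ℕ → ℕ) (T : STree) : Prop :=
  ∀ a b c : ℕ, a < b → b < c → treeInv n s T c a ≤ treeInv n s T c b

/-- `T` is an `s`-maximal-Tamari tree: `card(b,a) = s b` implies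
`card(c,a) = s c` for all `c > b`. -/
def MaxTamariProp (n : ℕ) (s : ℕ → ℕ) (T : STree) : Prop :=
  ∀ a b c : ℕ, 1 ≤ a → a < b → b < c → c ≤ n →
    treeInv n s T b a = s b → treeInv n s T c a = s c

/-- The projection `π↓` on inversion sets:
`card_Q(c,a) = min { card_T(c,b) : a ≤ b < c }`. -/
noncomputable def pidownInv (n : ℕ) (s : ℕ → ℕ) (T : STree) : ℕ → ℕ → ℕ :=
  fun c a => sInf {v | ∃ b : ℕ, a ≤ b ∧ b < c ∧ v = treeInv n s T c b}

open scoped Classical in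
/-- The projection `π↑` on inversion sets: `card_R(c,a) = s c` if there is
`a < b < c` with `card_T(b,a) = s b`, and `card_R(c,a) = card_T(c,a)` otherwise. -/
noncomputable def piupInv (n : ℕ) (s : ℕ → ℕ) (T : STree) : ℕ → ℕ → ℕ :=
  fun c a =>
    if 1 ≤ a ∧ a < c ∧ c ≤ n then
      if ∃ b : ℕ, a < b ∧ b < c ∧ treeInv n s T b a = s b then s c
      else treeInv n s T c a
    else 0

end STree

/-! A transitivity path `c = b₁ > b₂ > ⋯ > a` with `a < b < c` can be rerouted to end at `b`
without lowering its first value `K c b₂`: follow it while it stays above `b`, and at the first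
vertex `y < b`, reached from some `x > b`, apply planarity to `y < b < x`. Either
`K b y = s b`, and then `b > y > ⋯ > a` witnesses `tc K b a = s b`, or `K x y ≤ K x b`, and the
path may jump from `x` to `b` directly. Hence `tc K b a = s b` or `tc K c a ≤ tc K c b`. -/

open Relation

namespace STree

/-- The steps of the transitivity paths in the definition of `tc`. -/
abbrev TcStep (K : ℕ → ℕ → ℕ) (u w : ℕ) : Prop := w < u ∧ 0 < K u w

theorem exists_tcPath_iff {K : ℕ → ℕ → ℕ} {c b a : ℕ} :
    (∃ l : List ℕ, List.IsChain (TcStep K) (c :: b :: l) ∧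
      (b :: l).getLast (List.cons_ne_nil b l) = a) ↔
      TcStep K c b ∧ ReflTransGen (TcStep K) b a := by
  constructor
  · rintro ⟨l, hl, rfl⟩
    rw [List.isChain_cons_cons] at hl
    exact ⟨hl.1, List.relationReflTransGen_of_exists_isChain_cons l hl.2 rfl⟩
  · rintro ⟨hcb, hba⟩
    obtain ⟨l, hl, rfl⟩ := List.exists_isChain_cons_of_relationReflTransGen hba
    exact ⟨l, List.isChain_cons_cons.2 ⟨hcb, hl⟩, rfl⟩

theorem tc_le_of_forall {K : ℕ → ℕ → ℕ} {c a m : ℕ}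
    (h : ∀ b, TcStep K c b → ReflTransGen (TcStep K) b a → K c b ≤ m) : tc K c a ≤ m := by
  refine csSup_le' ?_
  rintro _ ⟨b, l, hl, hla, rfl⟩
  obtain ⟨hcb, hba⟩ := exists_tcPath_iff.1 ⟨l, hl, hla⟩
  exact h b hcb hba

variable {s : ℕ → ℕ} {K : ℕ → ℕ → ℕ}

theorem tc_le (hK : ∀ y x, K y x ≤ s y) (c a : ℕ) : tc K c a ≤ s c :=
  tc_le_of_forall fun b _ _ => hK c b

theorem le_tc (hK : ∀ y x, K y x ≤ s y) {c b a : ℕ} (hcb : TcStep K c b)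
    (hba : ReflTransGen (TcStep K) b a) : K c b ≤ tc K c a := by
  obtain ⟨l, hl, hla⟩ := exists_tcPath_iff.2 ⟨hcb, hba⟩
  refine le_csSup ⟨s c, ?_⟩ ⟨b, l, hl, hla, rfl⟩
  rintro _ ⟨b', -, -, -, rfl⟩
  exact hK c b'

theorem InvPlanar.tc_eq_or_step (hp : InvPlanar s K) (hK : ∀ y x, K y x ≤ s y)
    {a b c y : ℕ} (hyb : y < b) (hbc : b < c) (hcy : TcStep K c y)
    (hya : ReflTransGen (TcStep K) y a) : tc K b a = s b ∨ TcStep K c b ∧ K c y ≤ K c b := by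
  rcases hp y b c hyb hbc with hby | hle
  · left
    refine le_antisymm (tc_le hK b a) ?_
    rcases Nat.eq_zero_or_pos (s b) with hs | hs
    · omega
    · exact hby ▸ le_tc hK ⟨hyb, hby ▸ hs⟩ hya
  · exact Or.inr ⟨⟨hbc, hcy.2.trans_le hle⟩, hle⟩

theorem InvPlanar.tc_eq_or_reroute (hp : InvPlanar s K) (hK : ∀ y x, K y x ≤ s y)
    {a b c y : ℕ} (hab : a < b) (hbc : b < c) (hcy : TcStep K c y)
    (hya : ReflTransGen (TcStep K) y a) :
    tc K b a = s b ∨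
      ∃ y', TcStep K c y' ∧ ReflTransGen (TcStep K) y' b ∧ K c y ≤ K c y' := by
  induction hya using ReflTransGen.head_induction_on generalizing c with
  | refl =>
    refine (hp.tc_eq_or_step hK hab hbc hcy .refl).imp_right fun ⟨hcb, hle⟩ => ?_
    exact ⟨b, hcb, .refl, hle⟩
  | @head y z hyz hza ih =>
    rcases lt_trichotomy y b with hyb | rfl | hby
    · refine (hp.tc_eq_or_step hK hyb hbc hcy (.head hyz hza)).imp_right fun ⟨hcb, hle⟩ => ?_
      exact ⟨b, hcb, .refl, hle⟩
    · exact Or.inr ⟨y, hcy, .refl, le_rfl⟩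
    · refine (ih hby hyz).imp_right fun ⟨y', hyy', hy'b, _⟩ => ?_
      exact ⟨y, hcy, .head hyy' hy'b, le_rfl⟩

end STree

open STree in
/-- Planarity is preserved under transitive closure of multi inversion sets. -/
theorem tc_planar (n : ℕ) (s : ℕ → ℕ) (K : ℕ → ℕ → ℕ)
    (hK : IsMultiInvSet n s K) (hp : InvPlanar s K) :
    InvPlanar s (tc K) := by
  intro a b c hab hbc
  refine or_iff_not_imp_left.2 fun hba => tc_le_of_forall fun y hcy hya => ?_
  obtain h | ⟨y', hcy', hy'b, hle⟩ := hp.tc_eq_or_reroute hK.1 hab hbc hcy hya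
  · exact absurd h hba
  · exact hle.trans (le_tc hK.1 hcy' hy'b)
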